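/- Let (Ω,𝒜,P) be a probability space and (lₙ)_{n≥1} a sequence of independent real-valued random variables. Assume there exists c > 0 such that limsup_{n→∞} P({ω : |lₙ(ω)| ≤ c}) < 1. Let (aₙ)_{n≥1} be a sequence of nonnegative real numbers with Σ_{n=1}^∞ aₙ = ∞. Then P({ω : Σ_{n=1}^∞ aₙ·lₙ(ω)² < ∞}) = 0, i.e. almost surely Σ_{n=1}^∞ aₙ·lₙ(ω)² = ∞. -/

import Mathlib

open MeasureTheory ProbabilityTheory Filter
open scoped ENNReal NNReal

/-- Convexity bound: `exp (-y) ≤ 1 - (1 - e⁻¹) y` for `y ∈ [0,1]`. -/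
lemma aux_exp_neg_le (y : ℝ) (h0 : 0 ≤ y) (h1 : y ≤ 1) :
    Real.exp (-y) ≤ 1 - (1 - Real.exp (-1)) * y := by
  have h := convexOn_exp.2 (Set.mem_univ (0:ℝ)) (Set.mem_univ (-1:ℝ))
    (by linarith : (0:ℝ) ≤ 1 - y) h0 (by ring)
  simp only [smul_eq_mul, mul_zero, zero_add, mul_neg_one, Real.exp_zero, mul_one] at h
  linarith

/-- Appendix B (lack of `H^s` regularization): if `(lₙ)` are independent real random
variables with `limsup P(|lₙ| ≤ c) < 1` for some `c > 0`, and `(aₙ)` are nonnegative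
reals with divergent sum, then almost surely `Σ aₙ lₙ² = ∞`. -/
theorem stmt_9
    {Ω : Type*} [MeasurableSpace Ω] (P : Measure Ω) [IsProbabilityMeasure P]
    (l : ℕ → Ω → ℝ) (hmeas : ∀ n, Measurable (l n))
    (hindep : iIndepFun l P)
    (c : ℝ) (hc : 0 < c)
    (hlimsup : limsup (fun n => P {ω | |l n ω| ≤ c}) atTop < 1)
    (a : ℕ → ℝ) (ha : ∀ n, 0 ≤ a n) (hdiv : ¬ Summable a) :
    P {ω | Summable (fun n => a n * l n ω ^ 2)} = 0 := by
  classical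
  -- uniform lower bound on P(|lₙ| > c) eventually
  obtain ⟨r, hr1, hr2⟩ := exists_between hlimsup
  obtain ⟨N, hN⟩ := eventually_atTop.1 (eventually_lt_of_limsup_lt hr1)
  set δ : ℝ := (1 - r).toReal with hδdef
  have hδpos : 0 < δ := by
    apply ENNReal.toReal_pos
    · simp only [ne_eq, tsub_eq_zero_iff_le, not_le]; exact hr2
    · exact (tsub_le_self.trans_lt (by norm_num : (1:ℝ≥0∞) < ⊤)).ne
  have hAmeas : ∀ n, MeasurableSet {ω | |l n ω| ≤ c} := fun n =>
    measurableSet_le (hmeas n).abs measurable_const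
  have hPA : ∀ n, N ≤ n → δ ≤ (P {ω | |l n ω| ≤ c}ᶜ).toReal := by
    intro n hn
    have h1 : 1 - r ≤ P {ω | |l n ω| ≤ c}ᶜ := by
      rw [prob_compl_eq_one_sub (hAmeas n)]
      exact tsub_le_tsub_left (hN n hn).le 1
    exact ENNReal.toReal_mono (measure_ne_top P _) h1
  -- truncated variables
  set Y : ℕ → Ω → ℝ := fun n ω => min (a n * l n ω ^ 2) 1 with hYdef
  have hY0 : ∀ n ω, 0 ≤ Y n ω := fun n ω =>
    le_min (mul_nonneg (ha n) (sq_nonneg _)) zero_le_one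
  have hY1 : ∀ n ω, Y n ω ≤ 1 := fun n ω => min_le_right _ _
  have hYmeas : ∀ n, Measurable (Y n) := fun n =>
    (measurable_const.mul ((hmeas n).pow_const 2)).min measurable_const
  have hYint : ∀ n, Integrable (Y n) P := by
    intro n
    refine (integrable_const (1:ℝ)).mono' (hYmeas n).aestronglyMeasurable ?_
    filter_upwards with ω
    rw [Real.norm_eq_abs, abs_of_nonneg (hY0 n ω)]; exact hY1 n ω
  -- the exponentials
  set G : ℕ → Ω → ℝ := fun n ω => Real.exp (-(Y n ω)) with hGdef
  have hGmeas : ∀ n, Measurable (G n) := fun n => (hYmeas n).neg.exp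
  have hG0 : ∀ n ω, 0 ≤ G n ω := fun n ω => (Real.exp_pos _).le
  have hG1 : ∀ n ω, G n ω ≤ 1 := fun n ω =>
    Real.exp_le_one_iff.2 (neg_nonpos.2 (hY0 n ω))
  have hGint : ∀ n, Integrable (G n) P := by
    intro n
    refine (integrable_const (1:ℝ)).mono' (hGmeas n).aestronglyMeasurable ?_
    filter_upwards with ω
    rw [Real.norm_eq_abs, abs_of_nonneg (hG0 n ω)]; exact hG1 n ω
  have hGindep : iIndepFun G P := by
    have := hindep.comp (fun n x => Real.exp (-(min (a n * x ^ 2) 1)))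
      (fun n => (((measurable_const.mul ((measurable_id.pow_const 2))).min
        measurable_const).neg).exp)
    exact this
  -- the partial products
  set F : ℕ → Ω → ℝ := fun n => ∏ k ∈ Finset.range n, G k with hFdef
  have hFapply : ∀ n ω, F n ω = ∏ k ∈ Finset.range n, G k ω := by
    intro n ω; simp [hFdef]
  have hFmeas : ∀ n, Measurable (F n) := by
    intro n
    have h : F n = fun ω => ∏ k ∈ Finset.range n, G k ω := funext (hFapply n)
    rw [h]
    exact Finset.measurable_prod _ fun k _ => hGmeas k
  have hF0 : ∀ n ω, 0 ≤ F n ω := by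
    intro n ω; rw [hFapply]
    exact Finset.prod_nonneg fun k _ => hG0 k ω
  have hF1 : ∀ n ω, F n ω ≤ 1 := by
    intro n ω; rw [hFapply]
    exact Finset.prod_le_one (fun k _ => hG0 k ω) (fun k _ => hG1 k ω)
  have hFint : ∀ n, Integrable (F n) P := by
    intro n
    refine (integrable_const (1:ℝ)).mono' (hFmeas n).aestronglyMeasurable ?_
    filter_upwards with ω
    rw [Real.norm_eq_abs, abs_of_nonneg (hF0 n ω)]; exact hF1 n ω
  -- product formula via independence
  have key : ∀ n, ∫ ω, F n ω ∂P = ∏ k ∈ Finset.range n, ∫ ω, G k ω ∂P := by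
    intro n
    induction n with
    | zero => simp [hFdef]
    | succ n ih =>
      have hsplit : F (n + 1) = F n * G n := by
        simp [hFdef, Finset.prod_range_succ]
      have hind : IndepFun (F n) (G n) P :=
        hGindep.indepFun_prod_range_succ hGmeas n
      calc ∫ ω, F (n+1) ω ∂P = ∫ ω, (F n * G n) ω ∂P := by rw [hsplit]
        _ = (∫ ω, F n ω ∂P) * ∫ ω, G n ω ∂P :=
            hind.integral_mul_eq_mul_integral (hFint n).aestronglyMeasurable (hGint n).aestronglyMeasurable
        _ = ∏ k ∈ Finset.range (n+1), ∫ ω, G k ω ∂P := by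
            rw [ih, Finset.prod_range_succ]
  -- the truncated coefficients
  set b : ℕ → ℝ := fun n => min (a n * c ^ 2) 1 with hbdef
  have hb0 : ∀ n, 0 ≤ b n := fun n =>
    le_min (mul_nonneg (ha n) (sq_nonneg _)) zero_le_one
  have hbdiv : ¬ Summable b := by
    intro hb
    apply hdiv
    have hsmall : ∀ᶠ n in atTop, b n < 1 :=
      hb.tendsto_atTop_zero.eventually_lt_const one_pos
    obtain ⟨M, hM⟩ := eventually_atTop.1 hsmall
    have heq : ∀ n, M ≤ n → a n = b n / c ^ 2 := by
      intro n hn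
      have hx : a n * c ^ 2 < 1 := by
        rcases min_lt_iff.1 (hM n hn) with h | h
        · exact h
        · exact absurd h (lt_irrefl 1)
      have h1 : b n = a n * c ^ 2 := min_eq_left hx.le
      rw [h1]; field_simp
    have h2 : Summable (fun n => b (n + M) / c ^ 2) :=
      ((summable_nat_add_iff M).2 hb).div_const _
    have h3 : Summable (fun n => a (n + M)) :=
      h2.congr fun n => (heq _ (Nat.le_add_left M n)).symm
    exact (summable_nat_add_iff M).1 h3
  -- lower bound on ∫ Y n for n ≥ N
  have hYlow : ∀ n, N ≤ n → δ * b n ≤ ∫ ω, Y n ω ∂P := by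
    intro n hn
    have hind_le : ∀ ω, ({ω | |l n ω| ≤ c}ᶜ).indicator (fun _ => b n) ω ≤ Y n ω := by
      intro ω
      by_cases hω : ω ∈ {ω | |l n ω| ≤ c}ᶜ
      · rw [Set.indicator_of_mem hω]
        have hlc : c ≤ |l n ω| := le_of_lt (not_le.1 hω)
        have hsq : c ^ 2 ≤ l n ω ^ 2 := by
          rw [← sq_abs (l n ω)]
          exact pow_le_pow_left₀ hc.le hlc 2
        exact min_le_min (mul_le_mul_of_nonneg_left hsq (ha n)) le_rfl
      · rw [Set.indicator_of_notMem hω]; exact hY0 n ω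
    have hintind : ∫ ω, ({ω | |l n ω| ≤ c}ᶜ).indicator (fun _ => b n) ω ∂P
        = (P {ω | |l n ω| ≤ c}ᶜ).toReal * b n := by
      rw [integral_indicator_const (b n) (hAmeas n).compl, smul_eq_mul, measureReal_def]
    have hint : Integrable (({ω | |l n ω| ≤ c}ᶜ).indicator (fun _ => b n)) P :=
      (integrable_const (b n)).indicator (hAmeas n).compl
    calc δ * b n ≤ (P {ω | |l n ω| ≤ c}ᶜ).toReal * b n :=
          mul_le_mul_of_nonneg_right (hPA n hn) (hb0 n)
      _ = ∫ ω, ({ω | |l n ω| ≤ c}ᶜ).indicator (fun _ => b n) ω ∂P := hintind.symm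
      _ ≤ ∫ ω, Y n ω ∂P := integral_mono hint (hYint n) hind_le
  -- upper bound on the factors
  set ε : ℝ := (1 - Real.exp (-1)) * δ with hεdef
  have hexp1 : Real.exp (-1 : ℝ) < 1 := by
    have h := Real.exp_lt_exp.2 (show (-1:ℝ) < 0 by norm_num)
    simpa using h
  have hεpos : 0 < ε := mul_pos (by linarith) hδpos
  have hIG0 : ∀ n, 0 ≤ ∫ ω, G n ω ∂P := fun n => integral_nonneg (hG0 n)
  have hIG1 : ∀ n, ∫ ω, G n ω ∂P ≤ 1 := by
    intro n
    calc ∫ ω, G n ω ∂P ≤ ∫ _ω, (1:ℝ) ∂P :=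
          integral_mono (hGint n) (integrable_const 1) (hG1 n)
      _ = 1 := by simp
  have hIG_le : ∀ n, N ≤ n → ∫ ω, G n ω ∂P ≤ Real.exp (-(ε * b n)) := by
    intro n hn
    have hptwise : ∀ ω, G n ω ≤ 1 - (1 - Real.exp (-1)) * Y n ω := fun ω =>
      aux_exp_neg_le _ (hY0 n ω) (hY1 n ω)
    have hint2 : Integrable (fun ω => 1 - (1 - Real.exp (-1)) * Y n ω) P :=
      (integrable_const 1).sub ((hYint n).const_mul _)
    have h1 : ∫ ω, G n ω ∂P ≤ ∫ ω, (1 - (1 - Real.exp (-1)) * Y n ω) ∂P :=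
      integral_mono (hGint n) hint2 hptwise
    have h2 : ∫ ω, (1 - (1 - Real.exp (-1)) * Y n ω) ∂P
        = 1 - (1 - Real.exp (-1)) * ∫ ω, Y n ω ∂P := by
      rw [integral_sub (integrable_const 1) ((hYint n).const_mul _),
        integral_const_mul]
      simp
    have h3 : ε * b n ≤ (1 - Real.exp (-1)) * ∫ ω, Y n ω ∂P := by
      rw [hεdef, mul_assoc]
      exact mul_le_mul_of_nonneg_left (hYlow n hn) (by linarith)
    have h4 : 1 - ε * b n ≤ Real.exp (-(ε * b n)) := by
      have := Real.add_one_le_exp (-(ε * b n)); linarith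
    rw [h2] at h1
    linarith
  -- the integral of F n tends to zero
  have hFbound : ∀ n, N ≤ n →
      ∫ ω, F n ω ∂P ≤ Real.exp (-(ε * ∑ k ∈ Finset.Ico N n, b k)) := by
    intro n hn
    rw [key n, ← Finset.prod_range_mul_prod_Ico _ hn]
    have h1 : ∏ k ∈ Finset.range N, ∫ ω, G k ω ∂P ≤ 1 :=
      Finset.prod_le_one (fun k _ => hIG0 k) (fun k _ => hIG1 k)
    have h2 : ∏ k ∈ Finset.Ico N n, ∫ ω, G k ω ∂P
        ≤ ∏ k ∈ Finset.Ico N n, Real.exp (-(ε * b k)) :=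
      Finset.prod_le_prod (fun k _ => hIG0 k)
        (fun k hk => hIG_le k (Finset.mem_Ico.1 hk).1)
    have h3 : ∏ k ∈ Finset.Ico N n, Real.exp (-(ε * b k))
        = Real.exp (-(ε * ∑ k ∈ Finset.Ico N n, b k)) := by
      rw [← Real.exp_sum]
      congr 1
      rw [Finset.mul_sum, ← Finset.sum_neg_distrib]
    have h4 : 0 ≤ ∏ k ∈ Finset.Ico N n, ∫ ω, G k ω ∂P :=
      Finset.prod_nonneg fun k _ => hIG0 k
    calc (∏ k ∈ Finset.range N, ∫ ω, G k ω ∂P) * ∏ k ∈ Finset.Ico N n, ∫ ω, G k ω ∂P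
        ≤ 1 * ∏ k ∈ Finset.Ico N n, ∫ ω, G k ω ∂P :=
          mul_le_mul_of_nonneg_right h1 h4
      _ = ∏ k ∈ Finset.Ico N n, ∫ ω, G k ω ∂P := one_mul _
      _ ≤ ∏ k ∈ Finset.Ico N n, Real.exp (-(ε * b k)) := h2
      _ = Real.exp (-(ε * ∑ k ∈ Finset.Ico N n, b k)) := h3
  have hSum : Tendsto (fun n => ∑ k ∈ Finset.range n, b k) atTop atTop :=
    (not_summable_iff_tendsto_nat_atTop_of_nonneg hb0).1 hbdiv
  have hSumIco : Tendsto (fun n => ∑ k ∈ Finset.Ico N n, b k) atTop atTop := by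
    apply Tendsto.congr'
      _ (tendsto_atTop_add_const_right atTop (-(∑ k ∈ Finset.range N, b k)) hSum)
    filter_upwards [eventually_ge_atTop N] with n hn
    rw [Finset.sum_Ico_eq_sub _ hn]; ring
  have hgto : Tendsto (fun n => Real.exp (-(ε * ∑ k ∈ Finset.Ico N n, b k)))
      atTop (nhds 0) := by
    have h1 : Tendsto (fun n => ε * ∑ k ∈ Finset.Ico N n, b k) atTop atTop :=
      hSumIco.const_mul_atTop hεpos
    have h2 : Tendsto (fun n => -(ε * ∑ k ∈ Finset.Ico N n, b k)) atTop atBot :=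
      tendsto_neg_atTop_atBot.comp h1
    exact Real.tendsto_exp_atBot.comp h2
  have hFto : Tendsto (fun n => ∫ ω, F n ω ∂P) atTop (nhds 0) := by
    refine squeeze_zero' (Eventually.of_forall fun n => integral_nonneg (hF0 n)) ?_ hgto
    filter_upwards [eventually_ge_atTop N] with n hn
    exact hFbound n hn
  -- the tail sets
  set U : Ω → ℝ≥0∞ := fun ω => ∑' k, ENNReal.ofReal (Y k ω) with hUdef
  have hUmeas : Measurable U :=
    Measurable.ennreal_tsum fun k => (hYmeas k).ennreal_ofReal
  have hT0 : ∀ m : ℕ, P {ω | U ω ≤ (m : ℝ≥0∞)} = 0 := by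
    intro m
    set T := {ω | U ω ≤ (m : ℝ≥0∞)} with hTdef
    have hTm : MeasurableSet T := hUmeas measurableSet_Iic
    have hlow : ∀ n ω, T.indicator (fun _ => Real.exp (-(m:ℝ))) ω ≤ F n ω := by
      intro n ω
      by_cases hω : ω ∈ T
      · rw [Set.indicator_of_mem hω]
        have hsum_le : ∑ k ∈ Finset.range n, Y k ω ≤ (m : ℝ) := by
          have h1 : ENNReal.ofReal (∑ k ∈ Finset.range n, Y k ω)
              = ∑ k ∈ Finset.range n, ENNReal.ofReal (Y k ω) :=
            ENNReal.ofReal_sum_of_nonneg fun k _ => hY0 k ω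
          have h2 : (∑ k ∈ Finset.range n, ENNReal.ofReal (Y k ω)) ≤ U ω :=
            ENNReal.sum_le_tsum _
          have h3 : ENNReal.ofReal (∑ k ∈ Finset.range n, Y k ω)
              ≤ ENNReal.ofReal (m:ℝ) := by
            rw [h1]
            refine h2.trans (le_trans hω ?_)
            simp
          exact (ENNReal.ofReal_le_ofReal_iff (by positivity)).1 h3
        have hFe : F n ω = Real.exp (∑ k ∈ Finset.range n, -(Y k ω)) := by
          rw [Real.exp_sum, hFapply]
        rw [hFe]
        apply Real.exp_le_exp.2
        rw [Finset.sum_neg_distrib]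
        linarith
      · rw [Set.indicator_of_notMem hω]; exact hF0 n ω
    have hintind : ∀ n, Real.exp (-(m:ℝ)) * (P T).toReal ≤ ∫ ω, F n ω ∂P := by
      intro n
      have h1 : ∫ ω, T.indicator (fun _ => Real.exp (-(m:ℝ))) ω ∂P
          = (P T).toReal * Real.exp (-(m:ℝ)) := by
        rw [integral_indicator_const _ hTm, smul_eq_mul, measureReal_def]
      have h2 := integral_mono ((integrable_const _).indicator hTm) (hFint n) (hlow n)
      rw [h1] at h2
      linarith
    have hle : Real.exp (-(m:ℝ)) * (P T).toReal ≤ 0 :=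
      ge_of_tendsto hFto (Eventually.of_forall hintind)
    have htr : (P T).toReal = 0 := by
      have h1 := Real.exp_pos (-(m:ℝ))
      have h2 : (0:ℝ) ≤ (P T).toReal := ENNReal.toReal_nonneg
      nlinarith
    rcases (ENNReal.toReal_eq_zero_iff (P T)).1 htr with h | h
    · exact h
    · exact absurd h (measure_ne_top P T)
  -- conclusion
  have hsub : {ω | Summable (fun n => a n * l n ω ^ 2)}
      ⊆ ⋃ m : ℕ, {ω | U ω ≤ (m : ℝ≥0∞)} := by
    intro ω hω
    have hYsum : Summable (fun n => Y n ω) :=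
      Summable.of_nonneg_of_le (fun n => hY0 n ω) (fun n => min_le_left _ _) hω
    obtain ⟨m, hm⟩ := exists_nat_ge (∑' n, Y n ω)
    refine Set.mem_iUnion.2 ⟨m, ?_⟩
    show U ω ≤ (m : ℝ≥0∞)
    have hU : U ω = ENNReal.ofReal (∑' n, Y n ω) :=
      (ENNReal.ofReal_tsum_of_nonneg (fun n => hY0 n ω) hYsum).symm
    rw [hU]
    calc ENNReal.ofReal (∑' n, Y n ω) ≤ ENNReal.ofReal (m:ℝ) :=
          ENNReal.ofReal_le_ofReal hm
      _ = (m:ℝ≥0∞) := by simp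
  have hfin : P {ω | Summable (fun n => a n * l n ω ^ 2)} ≤ 0 := by
    calc P {ω | Summable (fun n => a n * l n ω ^ 2)}
        ≤ P (⋃ m : ℕ, {ω | U ω ≤ (m:ℝ≥0∞)}) := measure_mono hsub
      _ = 0 := measure_iUnion_null fun m => hT0 m
  exact le_antisymm hfin (by positivity)
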